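/- arXiv:math/0408040 — 11 statements merged into one kernel-verified Lean document; each statement's English description precedes it below -/
import Mathlib

section
/- If X is a rack and A = (A, φ, ψ) is an X-module, then the semidirect product A ⋊ X = { (a,x) : x ∈ X, a ∈ A_x } with operation (a,x)^(b,y) := (φ_{x,y}(a) + ψ_{y,x}(b), x^y) satisfies the self-distributivity axiom: ((a,x)^(b,y))^(c,z) = ((a,x)^(c,z))^((b,y)^(c,z)). -/
/-- A rack: a set with an operation `act a b` ("a^b") such that right
translation by each element is uniquely invertible (R1) and the
self-distributivity law (R2) holds. -/
structure RackStr (X : Type*) where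
  act : X → X → X
  uniq : ∀ a b : X, ∃! c : X, act c b = a
  dist : ∀ a b c : X, act (act a b) c = act (act a c) (act b c)

/-- A rack module over `(X, r)`: abelian groups `A x`, isomorphisms
`phi x y : A x ≃+ A (x^y)` and homomorphisms `psi y x : A y →+ A (x^y)`
satisfying the rack-module axioms. -/
structure RackMod {X : Type*} (r : RackStr X) (A : X → Type*)
    [∀ x, AddCommGroup (A x)] where
  phi : ∀ x y : X, A x ≃+ A (r.act x y)
  psi : ∀ y x : X, A y →+ A (r.act x y)
  phi_phi : ∀ (x y z : X) (a : A x),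
    cast (congrArg A (r.dist x y z)) (phi (r.act x y) z (phi x y a))
      = phi (r.act x z) (r.act y z) (phi x z a)
  phi_psi : ∀ (x y z : X) (b : A y),
    cast (congrArg A (r.dist x y z)) (phi (r.act x y) z (psi y x b))
      = psi (r.act y z) (r.act x z) (phi y z b)
  psi_psi : ∀ (x y z : X) (c : A z),
    cast (congrArg A (r.dist x y z)) (psi z (r.act x y) c)
      = phi (r.act x z) (r.act y z) (psi z x c)
        + psi (r.act y z) (r.act x z) (psi z y c)

/-- The semidirect product operation on `{(a,x) : a ∈ A x}`:
`(a,x)^(b,y) = (φ_{x,y}(a) + ψ_{y,x}(b), x^y)`. -/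
@[reducible] def sdOp {X : Type*} {r : RackStr X} {A : X → Type*} [∀ x, AddCommGroup (A x)]
    (m : RackMod r A) (p q : Σ x, A x) : Σ x, A x :=
  ⟨r.act p.1 q.1, m.phi p.1 q.1 p.2 + m.psi q.1 p.1 q.2⟩

lemma castAdd' {X : Type*} (A : X → Type*) [∀ x, AddCommGroup (A x)]
    {x y : X} (h : x = y) (u v : A x) :
    cast (congrArg A h) (u + v) = cast (congrArg A h) u + cast (congrArg A h) v := by
  subst h; rfl

/-- The semidirect product `A ⋊ X` satisfies the self-distributivity axiom. -/
theorem sdOp_self_distrib {X : Type*} {r : RackStr X} {A : X → Type*}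
    [∀ x, AddCommGroup (A x)] (m : RackMod r A) (p q s : Σ x, A x) :
    sdOp m (sdOp m p q) s = sdOp m (sdOp m p s) (sdOp m q s) := by
  obtain ⟨x, a⟩ := p
  obtain ⟨y, b⟩ := q
  obtain ⟨z, c⟩ := s
  refine Sigma.ext (r.dist x y z) (heq_of_cast_eq (congrArg A (r.dist x y z)) ?_)
  simp only [map_add]
  rw [castAdd' A (r.dist x y z), castAdd' A (r.dist x y z)]
  rw [m.phi_phi, m.phi_psi, m.psi_psi]
  abel
end

section
/- If X is a rack and A = (A, φ, ψ) is an X-module, then in the semidirect product A ⋊ X, for any (a,x) and (b,y) there is a unique (c,z) with (c,z)^(b,y) = (a,x); explicitly (c,z) = (φ_{z,y}⁻¹(a − ψ_{y,z}(b)), x^(ȳ)), where x^(ȳ) is the unique element z of X with z^y = x. Hence A ⋊ X is a rack. -/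
lemma sig_eq {X : Type*} {A : X → Type*} {u v : X} (h : u = v) {au : A u} {av : A v}
    (h2 : cast (congrArg A h) au = av) : (⟨u, au⟩ : Σ x, A x) = ⟨v, av⟩ := by
  subst h; simpa using h2

/-- In `A ⋊ X`, for any `(a,x)` and `(b,y)` there is a unique `(c,z)` with
`(c,z)^(b,y) = (a,x)`, given explicitly by
`(c,z) = (φ_{z,y}⁻¹(a − ψ_{y,z}(b)), x^ȳ)` where `z = x^ȳ` is the unique
element with `z^y = x`.  Hence `A ⋊ X` is a rack. -/
theorem sdOp_unique_division {X : Type*} {r : RackStr X} {A : X → Type*}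
    [∀ x, AddCommGroup (A x)] (m : RackMod r A) (p q : Σ x, A x) :
    let z : X := (r.uniq p.1 q.1).choose
    ∀ hz : r.act z q.1 = p.1,
    sdOp m ⟨z, (m.phi z q.1).symm
        (cast (congrArg A hz.symm) p.2 - m.psi q.1 z q.2)⟩ q = p ∧
    ∀ c : Σ x, A x, sdOp m c q = p →
      c = ⟨z, (m.phi z q.1).symm
        (cast (congrArg A hz.symm) p.2 - m.psi q.1 z q.2)⟩ := by
  intro z hz
  constructor
  · refine (sig_eq hz ?_).trans (Sigma.eta p)
    show cast (congrArg A hz)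
      ((m.phi z q.1) ((m.phi z q.1).symm (cast (congrArg A hz.symm) p.2 - m.psi q.1 z q.2))
        + m.psi q.1 z q.2) = p.2
    simp [sub_add_cancel]
  · intro c hc
    obtain ⟨w, d⟩ := c
    have h1 : r.act w q.1 = p.1 := congrArg Sigma.fst hc
    have hw : w = z := (r.uniq p.1 q.1).choose_spec.2 w h1
    subst hw
    have h2 : cast (congrArg A hz) (m.phi z q.1 d + m.psi q.1 z q.2) = p.2 := by
      have := (Sigma.mk.inj_iff.mp hc).2
      exact cast_eq_iff_heq.mpr this
    have h3 : m.phi z q.1 d + m.psi q.1 z q.2 = cast (congrArg A hz.symm) p.2 := by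
      rw [← h2]; simp
    refine sig_eq rfl ?_
    simp only [cast_eq]
    apply (m.phi z q.1).injective
    rw [AddEquiv.apply_symm_apply, eq_sub_iff_add_eq, h3]
end

section
/- Let X be a rack, A = (A,φ,ψ) an X-module, and p : A ⋊ X → X the projection (a,x) ↦ x. Then p is a rack homomorphism, the maps m((a₁,x),(a₂,x)) = (a₁+a₂,x) and r(a,x) = (−a,x) are rack homomorphisms (m defined on the fibre product over X), and s : x ↦ (0,x) is a rack homomorphism with p∘s = id. These give p : A ⋊ X → X the structure of an abelian group object in the slice category Rack/X. -/
/-- The projection `p : A ⋊ X → X` is a rack homomorphism, the fibrewise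
addition `m`, negation `r`, and zero-section `s` are rack homomorphisms, and
`p ∘ s = id`: these give `p : A ⋊ X → X` the structure of an abelian group
object in `Rack/X`. -/
theorem sdOp_abelian_group_object {X : Type*} {r : RackStr X} {A : X → Type*}
    [∀ x, AddCommGroup (A x)] (m : RackMod r A) :
    -- the projection is a rack homomorphism
    (∀ p q : Σ x, A x, (sdOp m p q).1 = r.act p.1 q.1) ∧
    -- fibrewise addition is a rack homomorphism (on the fibre product over X)
    (∀ (x y : X) (a₁ a₂ : A x) (b₁ b₂ : A y),
      sdOp m ⟨x, a₁ + a₂⟩ ⟨y, b₁ + b₂⟩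
        = ⟨r.act x y, ((sdOp m ⟨x, a₁⟩ ⟨y, b₁⟩).2 : A (r.act x y))
            + ((sdOp m ⟨x, a₂⟩ ⟨y, b₂⟩).2 : A (r.act x y))⟩) ∧
    -- fibrewise negation is a rack homomorphism
    (∀ (x y : X) (a : A x) (b : A y),
      sdOp m ⟨x, -a⟩ ⟨y, -b⟩ = ⟨r.act x y, -((sdOp m ⟨x, a⟩ ⟨y, b⟩).2 : A (r.act x y))⟩) ∧
    -- the zero section is a rack homomorphism
    (∀ x y : X, sdOp m ⟨x, (0 : A x)⟩ ⟨y, (0 : A y)⟩ = ⟨r.act x y, 0⟩) ∧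
    -- p ∘ s = id
    (∀ x : X, (⟨x, (0 : A x)⟩ : Σ x, A x).1 = x) := by
  refine ⟨fun p q => rfl, fun x y a₁ a₂ b₁ b₂ => ?_, fun x y a b => ?_, fun x y => ?_, fun x => rfl⟩
  · simp [sdOp, map_add]; abel
  · simp [sdOp, map_neg]; abel
  · simp [sdOp]
end

section
/- Let p : R → X be a rack epimorphism equipped with rack homomorphisms over X: a multiplication μ : R ×_X R → R, inverse ν : R → R, and section σ : X → R with pσ = id, making each fibre R_x = p⁻¹(x) an abelian group with identity σ(x). Define ρ_{x,y} : R_x → R_{x^y} by u ↦ u^{σ(y)}. Then each ρ_{x,y} is an abelian group isomorphism, and ρ_{x^y,z} ∘ ρ_{x,y} = ρ_{x^z,y^z} ∘ ρ_{x,z} for all x,y,z ∈ X. -/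
/-- Let `p : R → X` be an abelian group object in `Rack/X`: here `R = Σ x, F x`
with `p = Sigma.fst`, fibres `F x` abelian groups with zero `σ(x) = (x,0)`,
`hp` says `p` is a rack homomorphism, and `hμ, hν, hσ` say that fibrewise
addition, negation and the zero section are rack homomorphisms over `X`.
Then each `ρ_{x,y} : F x → F (x^y)`, `u ↦ u^{σ(y)}`, is an abelian group
isomorphism, and `ρ_{x^y,z} ∘ ρ_{x,y} = ρ_{x^z,y^z} ∘ ρ_{x,z}`. -/
theorem rho_iso_and_compat {X : Type*} (rX : RackStr X) (F : X → Type*)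
    [∀ x, AddCommGroup (F x)] (s : RackStr (Σ x, F x))
    (hp : ∀ u v : Σ x, F x, (s.act u v).1 = rX.act u.1 v.1)
    (hμ : ∀ (x y : X) (a₁ a₂ : F x) (b₁ b₂ : F y),
      s.act ⟨x, a₁ + a₂⟩ ⟨y, b₁ + b₂⟩
        = ⟨rX.act x y,
            cast (congrArg F (hp ⟨x, a₁⟩ ⟨y, b₁⟩)) (s.act ⟨x, a₁⟩ ⟨y, b₁⟩).2
          + cast (congrArg F (hp ⟨x, a₂⟩ ⟨y, b₂⟩)) (s.act ⟨x, a₂⟩ ⟨y, b₂⟩).2⟩)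
    (hν : ∀ (x y : X) (a : F x) (b : F y),
      s.act ⟨x, -a⟩ ⟨y, -b⟩
        = ⟨rX.act x y,
            -(cast (congrArg F (hp ⟨x, a⟩ ⟨y, b⟩)) (s.act ⟨x, a⟩ ⟨y, b⟩).2)⟩)
    (hσ : ∀ x y : X,
      s.act ⟨x, (0 : F x)⟩ ⟨y, (0 : F y)⟩ = ⟨rX.act x y, 0⟩) :
    let ρ : ∀ x y : X, F x → F (rX.act x y) := fun x y a =>
      cast (congrArg F (hp ⟨x, a⟩ ⟨y, 0⟩)) (s.act ⟨x, a⟩ ⟨y, (0 : F y)⟩).2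
    (∀ x y : X, Function.Bijective (ρ x y)) ∧
    (∀ (x y : X) (a b : F x), ρ x y (a + b) = ρ x y a + ρ x y b) ∧
    (∀ (x y z : X) (a : F x),
      cast (congrArg F (rX.dist x y z)) (ρ (rX.act x y) z (ρ x y a))
        = ρ (rX.act x z) (rX.act y z) (ρ x z a)) := by

  intro ρ
  have hsnd : ∀ {x : X} {u v : F x}, (⟨x, u⟩ : Σ x, F x) = ⟨x, v⟩ → u = v := by
    intro x u v h
    simpa using h
  have hsnd' : ∀ {x y : X} (h : x = y) {u : F x} {v : F y},
      (⟨x, u⟩ : Σ x, F x) = ⟨y, v⟩ → cast (congrArg F h) u = v := by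
    intro x y h u v hh
    subst h
    simpa using hsnd hh
  have hkey : ∀ (x y : X) (a : F x),
      s.act ⟨x, a⟩ ⟨y, (0 : F y)⟩ = ⟨rX.act x y, ρ x y a⟩ := by
    intro x y a
    exact Sigma.ext (hp ⟨x, a⟩ ⟨y, 0⟩) (cast_heq _ _).symm
  refine ⟨?_, ?_, ?_⟩
  · intro x y
    constructor
    · intro a b h
      have h1 : s.act ⟨x, a⟩ ⟨y, (0 : F y)⟩ = s.act ⟨x, b⟩ ⟨y, (0 : F y)⟩ := by
        rw [hkey, hkey, h]
      obtain ⟨c, hc, hu⟩ := s.uniq (s.act ⟨x, b⟩ ⟨y, (0 : F y)⟩) ⟨y, (0 : F y)⟩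
      have e1 := hu ⟨x, a⟩ h1
      have e2 := hu ⟨x, b⟩ rfl
      exact hsnd (e1.trans e2.symm)
    · intro b
      obtain ⟨c, hc, -⟩ := s.uniq ⟨rX.act x y, b⟩ ⟨y, (0 : F y)⟩
      have hc1 : c.1 = x := by
        obtain ⟨d, hd, hud⟩ := rX.uniq (rX.act x y) y
        have h3 : rX.act c.1 y = rX.act x y := by
          rw [← hp c ⟨y, (0 : F y)⟩, hc]
        exact (hud c.1 h3).trans (hud x rfl).symm
      refine ⟨cast (congrArg F hc1) c.2, ?_⟩
      have hce : (⟨x, cast (congrArg F hc1) c.2⟩ : Σ x, F x) = c :=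
        Sigma.ext hc1.symm (cast_heq _ _)
      have h4 := hkey x y (cast (congrArg F hc1) c.2)
      rw [hce, hc] at h4
      exact hsnd h4.symm
  · intro x y a b
    have h1 := hμ x y a b 0 0
    rw [add_zero (0 : F y)] at h1
    exact hsnd ((hkey x y (a + b)).symm.trans h1)
  · intro x y z a
    have hd := s.dist ⟨x, a⟩ ⟨y, (0 : F y)⟩ ⟨z, (0 : F z)⟩
    rw [hkey x y a, hkey x z a, hσ y z, hkey (rX.act x y) z,
      hkey (rX.act x z) (rX.act y z)] at hd
    exact hsnd' (rX.dist x y z) hd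
end

section
/- Let p : R → X be an abelian group object in Rack/X with structure maps μ, ν, σ as rack homomorphisms. Define λ_{y,x} : R_y → R_{x^y} by v ↦ σ(x)^v. Then each λ_{y,x} is an abelian group homomorphism, and for all x,y,z ∈ X, v ∈ R_y, w ∈ R_z: ρ_{x^y,z} λ_{y,x}(v) = λ_{y^z,x^z} ρ_{y,z}(v) and λ_{z,x^y}(w) = ρ_{x^z,y^z} λ_{z,x}(w) + λ_{y^z,x^z} λ_{z,y}(w), where ρ_{x,y}(u) = u^{σ(y)}. -/
/-- Let `p : R → X` be an abelian group object in `Rack/X` (here `R = Σ x, F x`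
with `p = Sigma.fst`, structure maps as rack homomorphisms over `X`).  Define
`λ_{y,x} : F y → F (x^y)`, `v ↦ σ(x)^v`, and `ρ_{x,y}(u) = u^{σ(y)}`.  Then
each `λ_{y,x}` is an abelian group homomorphism, and
`ρ_{x^y,z} λ_{y,x}(v) = λ_{y^z,x^z} ρ_{y,z}(v)` and
`λ_{z,x^y}(w) = ρ_{x^z,y^z} λ_{z,x}(w) + λ_{y^z,x^z} λ_{z,y}(w)`. -/
theorem lam_hom_and_compat {X : Type*} (rX : RackStr X) (F : X → Type*)
    [∀ x, AddCommGroup (F x)] (s : RackStr (Σ x, F x))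
    (hp : ∀ u v : Σ x, F x, (s.act u v).1 = rX.act u.1 v.1)
    (hμ : ∀ (x y : X) (a₁ a₂ : F x) (b₁ b₂ : F y),
      s.act ⟨x, a₁ + a₂⟩ ⟨y, b₁ + b₂⟩
        = ⟨rX.act x y,
            cast (congrArg F (hp ⟨x, a₁⟩ ⟨y, b₁⟩)) (s.act ⟨x, a₁⟩ ⟨y, b₁⟩).2
          + cast (congrArg F (hp ⟨x, a₂⟩ ⟨y, b₂⟩)) (s.act ⟨x, a₂⟩ ⟨y, b₂⟩).2⟩)
    (hν : ∀ (x y : X) (a : F x) (b : F y),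
      s.act ⟨x, -a⟩ ⟨y, -b⟩
        = ⟨rX.act x y,
            -(cast (congrArg F (hp ⟨x, a⟩ ⟨y, b⟩)) (s.act ⟨x, a⟩ ⟨y, b⟩).2)⟩)
    (hσ : ∀ x y : X,
      s.act ⟨x, (0 : F x)⟩ ⟨y, (0 : F y)⟩ = ⟨rX.act x y, 0⟩) :
    let ρ : ∀ x y : X, F x → F (rX.act x y) := fun x y a =>
      cast (congrArg F (hp ⟨x, a⟩ ⟨y, 0⟩)) (s.act ⟨x, a⟩ ⟨y, (0 : F y)⟩).2
    let lam : ∀ y x : X, F y → F (rX.act x y) := fun y x b =>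
      cast (congrArg F (hp ⟨x, 0⟩ ⟨y, b⟩)) (s.act ⟨x, (0 : F x)⟩ ⟨y, b⟩).2
    (∀ (y x : X) (b₁ b₂ : F y),
      lam y x (b₁ + b₂) = lam y x b₁ + lam y x b₂) ∧
    (∀ (x y z : X) (v : F y),
      cast (congrArg F (rX.dist x y z)) (ρ (rX.act x y) z (lam y x v))
        = lam (rX.act y z) (rX.act x z) (ρ y z v)) ∧
    (∀ (x y z : X) (w : F z),
      cast (congrArg F (rX.dist x y z)) (lam z (rX.act x y) w)
        = ρ (rX.act x z) (rX.act y z) (lam z x w)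
          + lam (rX.act y z) (rX.act x z) (lam z y w)) := by
  intro ρ lam
  have ext2 : ∀ (x y : X) (a : F x) (b : F y) (c : F (rX.act x y)),
      s.act ⟨x, a⟩ ⟨y, b⟩ = ⟨rX.act x y, c⟩ →
      cast (congrArg F (hp ⟨x, a⟩ ⟨y, b⟩)) (s.act ⟨x, a⟩ ⟨y, b⟩).2 = c := by
    intro x y a b c h
    rw [cast_eq_iff_heq]
    exact (Sigma.ext_iff.mp h).2
  have key : ∀ (x y : X) (a : F x) (b : F y),
      s.act ⟨x, a⟩ ⟨y, b⟩ = ⟨rX.act x y, ρ x y a + lam y x b⟩ := by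
    intro x y a b
    have h := hμ x y a 0 0 b
    simpa using h
  have ρ0 : ∀ x y : X, ρ x y 0 = 0 := fun x y => ext2 x y 0 0 0 (hσ x y)
  have lam0 : ∀ y x : X, lam y x 0 = 0 := fun y x => ext2 x y 0 0 0 (hσ x y)
  refine ⟨?_, ?_, ?_⟩
  · intro y x b₁ b₂
    have h := hμ x y 0 0 b₁ b₂
    have h' : s.act ⟨x, (0 : F x)⟩ ⟨y, b₁ + b₂⟩
        = ⟨rX.act x y, lam y x b₁ + lam y x b₂⟩ := by simpa using h
    exact ext2 x y 0 (b₁ + b₂) _ h'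
  · intro x y z v
    have d := s.dist ⟨x, (0 : F x)⟩ ⟨y, v⟩ ⟨z, (0 : F z)⟩
    simp only [key, ρ0, lam0, add_zero, zero_add] at d
    rw [cast_eq_iff_heq]
    exact (Sigma.ext_iff.mp d).2
  · intro x y z w
    have d := s.dist ⟨x, (0 : F x)⟩ ⟨y, (0 : F y)⟩ ⟨z, w⟩
    simp only [key, ρ0, lam0, add_zero, zero_add] at d
    rw [cast_eq_iff_heq]
    exact (Sigma.ext_iff.mp d).2
end

section
/- Let X be a quandle and p : R → X an abelian group object in Quandle/X with multiplication μ, inverse ν, and section σ. Then for all x ∈ X and a ∈ R_x, λ_{x,x}(a) + ρ_{x,x}(a) = a, where ρ_{x,x}(a) = a^{σ(x)} and λ_{x,x}(a) = σ(x)^a. That is, the induced X-module is a quandle module. -/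
/-- A quandle: a rack satisfying `a^a = a`. -/
structure QuandleStr (X : Type*) extends RackStr X where
  idem : ∀ a : X, act a a = a

/-- A quandle module: a rack module additionally satisfying
`ψ_{x,x}(a) + φ_{x,x}(a) = a`. -/
structure QuandleMod {X : Type*} (q : QuandleStr X) (A : X → Type*)
    [∀ x, AddCommGroup (A x)] extends RackMod q.toRackStr A where
  qcond : ∀ (x : X) (a : A x),
    cast (congrArg A (q.idem x)) (psi x x a + phi x x a) = a

/-- Let `X` be a quandle and `p : R → X` an abelian group object in
`Quandle/X` (here `R = Σ x, F x` with `p = Sigma.fst` and structure maps as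
quandle homomorphisms over `X`).  Then for all `x ∈ X` and `a ∈ R_x`,
`λ_{x,x}(a) + ρ_{x,x}(a) = a`, i.e. the induced `X`-module is a quandle
module. -/
theorem induced_module_is_quandle_module {X : Type*} (qX : QuandleStr X)
    (F : X → Type*) [∀ x, AddCommGroup (F x)] (s : QuandleStr (Σ x, F x))
    (hp : ∀ u v : Σ x, F x, (s.act u v).1 = qX.act u.1 v.1)
    (hμ : ∀ (x y : X) (a₁ a₂ : F x) (b₁ b₂ : F y),
      s.act ⟨x, a₁ + a₂⟩ ⟨y, b₁ + b₂⟩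
        = ⟨qX.act x y,
            cast (congrArg F (hp ⟨x, a₁⟩ ⟨y, b₁⟩)) (s.act ⟨x, a₁⟩ ⟨y, b₁⟩).2
          + cast (congrArg F (hp ⟨x, a₂⟩ ⟨y, b₂⟩)) (s.act ⟨x, a₂⟩ ⟨y, b₂⟩).2⟩)
    (hν : ∀ (x y : X) (a : F x) (b : F y),
      s.act ⟨x, -a⟩ ⟨y, -b⟩
        = ⟨qX.act x y,
            -(cast (congrArg F (hp ⟨x, a⟩ ⟨y, b⟩)) (s.act ⟨x, a⟩ ⟨y, b⟩).2)⟩)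
    (hσ : ∀ x y : X,
      s.act ⟨x, (0 : F x)⟩ ⟨y, (0 : F y)⟩ = ⟨qX.act x y, 0⟩) :
    let ρ : ∀ x y : X, F x → F (qX.act x y) := fun x y a =>
      cast (congrArg F (hp ⟨x, a⟩ ⟨y, 0⟩)) (s.act ⟨x, a⟩ ⟨y, (0 : F y)⟩).2
    let lam : ∀ y x : X, F y → F (qX.act x y) := fun y x b =>
      cast (congrArg F (hp ⟨x, 0⟩ ⟨y, b⟩)) (s.act ⟨x, (0 : F x)⟩ ⟨y, b⟩).2
    ∀ (x : X) (a : F x),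
      cast (congrArg F (qX.idem x)) (lam x x a + ρ x x a) = a := by
  intro ρ lam x a
  have h1 := hμ x x a 0 0 a
  rw [add_zero, zero_add] at h1
  rw [s.idem ⟨x, a⟩] at h1
  obtain ⟨h4, h5⟩ := Sigma.mk.inj_iff.mp h1.symm
  rw [add_comm]
  exact cast_eq_iff_heq.mpr h5
end

section
/- Let X be a rack, A an X-module, and σ a family {σ_{x,y} ∈ A_{x^y}}. If the operation (a,x)^(b,y) = (φ_{x,y}(a) + σ_{x,y} + ψ_{y,x}(b), x^y) on E[A,σ] = {(a,x) : a ∈ A_x} satisfies the rack self-distributivity axiom, then σ satisfies the cocycle condition: σ_{x^y,z} + φ_{x^y,z}(σ_{x,y}) = φ_{x^z,y^z}(σ_{x,z}) + σ_{x^z,y^z} + ψ_{y^z,x^z}(σ_{y,z}) for all x,y,z ∈ X. -/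
/-- The rack 2-cocycle condition for a family `σ x y ∈ A (x^y)`. -/
@[reducible] def IsCocycle {X : Type*} {r : RackStr X} {A : X → Type*}
    [∀ x, AddCommGroup (A x)] (m : RackMod r A)
    (σ : ∀ x y : X, A (r.act x y)) : Prop :=
  ∀ x y z : X,
    cast (congrArg A (r.dist x y z))
        (σ (r.act x y) z + m.phi (r.act x y) z (σ x y))
      = m.phi (r.act x z) (r.act y z) (σ x z) + σ (r.act x z) (r.act y z)
        + m.psi (r.act y z) (r.act x z) (σ y z)

/-- The operation of the extension `E[A,σ]`:
`(a,x)^(b,y) = (φ_{x,y}(a) + σ_{x,y} + ψ_{y,x}(b), x^y)`. -/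
@[reducible] def extOp {X : Type*} {r : RackStr X} {A : X → Type*} [∀ x, AddCommGroup (A x)]
    (m : RackMod r A) (σ : ∀ x y : X, A (r.act x y))
    (p q : Σ x, A x) : Σ x, A x :=
  ⟨r.act p.1 q.1, m.phi p.1 q.1 p.2 + σ p.1 q.1 + m.psi q.1 p.1 q.2⟩

/-- Conversely, if the operation of `E[A,σ]` satisfies the rack
self-distributivity axiom, then `σ` satisfies the cocycle condition. -/
theorem extOp_distrib_implies_cocycle {X : Type*} {r : RackStr X}
    {A : X → Type*} [∀ x, AddCommGroup (A x)] (m : RackMod r A)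
    (σ : ∀ x y : X, A (r.act x y))
    (hdist : ∀ p q s' : Σ x, A x,
      extOp m σ (extOp m σ p q) s'
        = extOp m σ (extOp m σ p s') (extOp m σ q s')) :
    IsCocycle m σ := by
  intro x y z
  have h := hdist ⟨x, 0⟩ ⟨y, 0⟩ ⟨z, 0⟩
  simp only [extOp, map_zero, add_zero, zero_add] at h
  obtain ⟨h1, h2⟩ := Sigma.mk.inj_iff.mp h
  rw [cast_eq_iff_heq]
  exact (heq_of_eq (add_comm _ _)).trans h2
end

section
/- Let X be a quandle and A = (A,φ,ψ) a quandle module over X, and let σ be a factor set satisfying the rack cocycle condition. Then the extension rack E[A,σ] with operation (a,x)^(b,y) = (φ_{x,y}(a) + σ_{x,y} + ψ_{y,x}(b), x^y) is a quandle if and only if σ_{x,x} = 0 for all x ∈ X. -/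

private lemma heq_zero_aux {X : Type*} {A : X → Type*} [∀ x, AddCommGroup (A x)]
    {x y : X} (h : x = y) : HEq (0 : A x) (0 : A y) := by subst h; rfl

/-- Let `X` be a quandle, `A` a quandle module over `X` and `σ` a factor set
satisfying the rack cocycle condition.  Then `E[A,σ]` is a quandle if and
only if `σ_{x,x} = 0` for all `x`. -/
theorem extOp_quandle_iff {X : Type*} {q : QuandleStr X} {A : X → Type*}
    [∀ x, AddCommGroup (A x)] (m : QuandleMod q A)
    (σ : ∀ x y : X, A (q.toRackStr.act x y))
    (hσ : IsCocycle m.toRackMod σ) :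
    (∀ p : Σ x, A x, extOp m.toRackMod σ p p = p) ↔ (∀ x : X, σ x x = 0) := by
  
  constructor
  · intro h x
    have h0 := h ⟨x, (0 : A x)⟩
    have h1 : (⟨q.toRackStr.act x x, σ x x⟩ : Σ x, A x) = ⟨x, (0 : A x)⟩ := by
      simpa using h0
    have h2 : HEq (σ x x) (0 : A x) := (Sigma.mk.inj_iff.mp h1).2
    exact eq_of_heq (h2.trans (heq_zero_aux (q.idem x)).symm)
  · intro h p
    obtain ⟨x, a⟩ := p
    have hq := m.qcond x a
    have hh : HEq (m.psi x x a + m.phi x x a) a := heq_of_cast_eq _ hq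
    refine Sigma.ext (q.idem x) ?_
    show HEq (m.phi x x a + σ x x + m.psi x x a) a
    rw [h x, add_zero, add_comm]
    exact hh
end

section
/- Let X be a rack, A an X-module, and σ, τ two factor sets satisfying the cocycle condition. Suppose there is a family υ = {υ_x ∈ A_x} with τ_{x,y} = σ_{x,y} + φ_{x,y}(υ_x) + ψ_{y,x}(υ_y) − υ_{x^y} for all x,y. Then the map θ : E[A,τ] → E[A,σ] defined by θ(a,x) = (a + υ_x, x) is a rack isomorphism commuting with the projections to X. -/
/-- If `τ_{x,y} = σ_{x,y} + φ_{x,y}(υ_x) + ψ_{y,x}(υ_y) − υ_{x^y}` for some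
family `υ`, then `θ : E[A,τ] → E[A,σ]`, `(a,x) ↦ (a + υ_x, x)`, is a rack
isomorphism commuting with the projections to `X`. -/
theorem equiv_cocycles_give_equivalence {X : Type*} {r : RackStr X}
    {A : X → Type*} [∀ x, AddCommGroup (A x)] (m : RackMod r A)
    (σ τ : ∀ x y : X, A (r.act x y))
    (hσ : IsCocycle m σ) (hτ : IsCocycle m τ)
    (υ : ∀ x : X, A x)
    (hυ : ∀ x y : X,
      τ x y = σ x y + m.phi x y (υ x) + m.psi y x (υ y) - υ (r.act x y)) :
    let θ : (Σ x, A x) → Σ x, A x := fun p => ⟨p.1, p.2 + υ p.1⟩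
    Function.Bijective θ ∧
    (∀ p q : Σ x, A x, θ (extOp m τ p q) = extOp m σ (θ p) (θ q)) ∧
    (∀ p : Σ x, A x, (θ p).1 = p.1) := by
  intro θ
  refine ⟨?_, ?_, fun p => rfl⟩
  · refine Function.bijective_iff_has_inverse.2
      ⟨fun p => ⟨p.1, p.2 - υ p.1⟩, fun p => by simp [θ], fun p => by simp [θ]⟩
  · rintro ⟨x, a⟩ ⟨y, b⟩
    show (⟨r.act x y, m.phi x y a + τ x y + m.psi y x b + υ (r.act x y)⟩ : Σ x, A x)
      = ⟨r.act x y, m.phi x y (a + υ x) + σ x y + m.psi y x (b + υ y)⟩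
    congr 1
    rw [hυ x y, map_add, map_add]
    abel
end

section
/- Let X be a rack, A an X-module, σ and τ factor sets, and suppose θ : E[A,τ] → E[A,σ] is a rack isomorphism over X that is equivariant for the fibrewise A_x-actions (θ(a₁·(a₂,x)) = a₁·θ(a₂,x), where a·(b,x) = (a+b,x)). Then there is a family υ = {υ_x ∈ A_x} with τ_{x,y} = σ_{x,y} + φ_{x,y}(υ_x) + ψ_{y,x}(υ_y) − υ_{x^y} for all x,y ∈ X. -/
/-- If `θ : E[A,τ] → E[A,σ]` is a rack isomorphism over `X` that is
equivariant for the fibrewise `A_x`-actions, then there is a family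
`υ = {υ_x ∈ A_x}` with
`τ_{x,y} = σ_{x,y} + φ_{x,y}(υ_x) + ψ_{y,x}(υ_y) − υ_{x^y}`. -/
theorem equivalence_gives_equiv_cocycles {X : Type*} {r : RackStr X}
    {A : X → Type*} [∀ x, AddCommGroup (A x)] (m : RackMod r A)
    (σ τ : ∀ x y : X, A (r.act x y))
    (hσ : IsCocycle m σ) (hτ : IsCocycle m τ)
    (θ : (Σ x, A x) → Σ x, A x)
    (hbij : Function.Bijective θ)
    (hhom : ∀ p q : Σ x, A x, θ (extOp m τ p q) = extOp m σ (θ p) (θ q))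
    (hover : ∀ p : Σ x, A x, (θ p).1 = p.1)
    (hequiv : ∀ (x : X) (a₁ a₂ : A x),
      θ ⟨x, a₁ + a₂⟩
        = ⟨x, a₁ + cast (congrArg A (hover ⟨x, a₂⟩)) (θ ⟨x, a₂⟩).2⟩) :
    ∃ υ : ∀ x : X, A x, ∀ x y : X,
      τ x y = σ x y + m.phi x y (υ x) + m.psi y x (υ y) - υ (r.act x y) := by
  classical
  set υ : ∀ x : X, A x := fun x => cast (congrArg A (hover ⟨x, 0⟩)) (θ ⟨x, 0⟩).2 with hυ
  have hθ : ∀ (x : X) (a : A x), θ ⟨x, a⟩ = ⟨x, a + υ x⟩ := by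
    intro x a
    have h := hequiv x a 0
    simpa using h
  refine ⟨υ, fun x y => ?_⟩
  have h := hhom ⟨x, 0⟩ ⟨y, 0⟩
  rw [hθ x 0, hθ y 0] at h
  simp only [extOp, map_zero, zero_add, add_zero, hθ] at h
  have h2 : τ x y + υ (r.act x y)
      = m.phi x y (υ x) + σ x y + m.psi y x (υ y) := by
    simpa using h
  rw [eq_sub_iff_add_eq, h2]
  abel
end

section
/- Let X be a rack, A an X-module, and f : E → X an extension of X by A with factor set σ relative to a section s : X → E. Then the map θ : E[A,σ] → E given by (a,x) ↦ a·s(x) is a rack isomorphism over X equivariant for the fibrewise A_x-actions; hence every extension of X by A is equivalent to E[A,σ] for its factor set σ. -/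
/-- Let `f : E → X` be an extension of a rack `X` by an `X`-module `A` (with
simply transitive fibrewise `A_x`-actions `sm` satisfying (X2) and (X3)),
with factor set `σ` relative to a section `s`.  Then `θ : E[A,σ] → E`,
`(a,x) ↦ a·s(x)`, is a rack isomorphism over `X` equivariant for the
fibrewise actions; hence every extension of `X` by `A` is equivalent to
`E[A,σ]`. -/
theorem extension_equivalent_to_factor_set_extension {X E : Type*}
    (rX : RackStr X) (rE : RackStr E) {A : X → Type*}
    [∀ x, AddCommGroup (A x)] (m : RackMod rX A)
    (f : E → X)
    (hf : ∀ u v : E, f (rE.act u v) = rX.act (f u) (f v))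
    (hsurj : Function.Surjective f)
    (sm : ∀ x : X, A x → E → E)
    (hfib : ∀ (x : X) (a : A x) (u : E), f u = x → f (sm x a u) = x)
    (hzero : ∀ (x : X) (u : E), sm x 0 u = u)
    (hadd : ∀ (x : X) (a b : A x) (u : E), sm x (a + b) u = sm x a (sm x b u))
    (htrans : ∀ (x : X) (u v : E), f u = x → f v = x →
      ∃! a : A x, sm x a u = v)
    (hX2 : ∀ (x y : X) (a : A x) (u v : E), f u = x → f v = y →
      rE.act (sm x a u) v = sm (rX.act x y) (m.phi x y a) (rE.act u v))
    (hX3 : ∀ (x y : X) (b : A y) (u v : E), f u = x → f v = y →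
      rE.act u (sm y b v) = sm (rX.act x y) (m.psi y x b) (rE.act u v))
    (s : X → E) (hs : ∀ x : X, f (s x) = x)
    (σ : ∀ x y : X, A (rX.act x y))
    (hσ : ∀ x y : X,
      rE.act (s x) (s y) = sm (rX.act x y) (σ x y) (s (rX.act x y))) :
    let θ : (Σ x, A x) → E := fun p => sm p.1 p.2 (s p.1)
    Function.Bijective θ ∧
    (∀ p q : Σ x, A x, θ (extOp m σ p q) = rE.act (θ p) (θ q)) ∧
    (∀ p : Σ x, A x, f (θ p) = p.1) ∧
    (∀ (x : X) (a₁ a₂ : A x), θ ⟨x, a₁ + a₂⟩ = sm x a₁ (θ ⟨x, a₂⟩)) := by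
  intro θ
  have hfθ : ∀ p : Σ x, A x, f (θ p) = p.1 := fun p => hfib p.1 p.2 (s p.1) (hs p.1)
  refine ⟨⟨?_, ?_⟩, ?_, hfθ, ?_⟩
  · rintro ⟨x, a⟩ ⟨y, b⟩ h
    have hxy : x = y := by
      have := congrArg f h
      rw [hfθ ⟨x, a⟩, hfθ ⟨y, b⟩] at this
      exact this
    subst hxy
    obtain ⟨c, hc, hu⟩ := htrans x (s x) (sm x b (s x)) (hs x) (hfib x b (s x) (hs x))
    have hab : a = b := (hu a h).trans (hu b rfl).symm
    rw [hab]
  · intro u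
    obtain ⟨a, ha, _⟩ := htrans (f u) (s (f u)) u (hs (f u)) rfl
    exact ⟨⟨f u, a⟩, ha⟩
  · rintro ⟨x, a⟩ ⟨y, b⟩
    simp only [θ, extOp]
    have fv : f (sm y b (s y)) = y := hfib y b (s y) (hs y)
    rw [hX2 x y a _ _ (hs x) fv, hX3 x y b _ _ (hs x) (hs y), hσ,
      show m.phi x y a + σ x y + m.psi y x b
          = m.phi x y a + (m.psi y x b + σ x y) by abel,
      hadd, hadd]
  · intro x a₁ a₂
    exact hadd x a₁ a₂ (s x)
end
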